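/- Let E be a standard Borel space and let κ₀, …, κ_{n−1} be Markov (probability) kernels from E to E, modeling a discrete-time Markov chain. Given a bounded measurable terminal weight h_n : E → ℝ with h_n(x) > 0 for all x, define backward h_t(x) = ∫ h_{t+1}(x') κ_t(x, dx') for t = n−1, …, 0, and assume 0 < h_t(x) < ∞ for all x and t. Define the h-transformed kernels κ*_t(x, ·) := (κ_t(x, ·)).withDensity(x' ↦ h_{t+1}(x')/h_t(x)). Fix x₀ ∈ E and let P (resp. Q*) denote the law on E^{n} of the full trajectory (X₁, …, X_n) of the chain with kernels κ₀, …, κ_{n−1} (resp. κ*₀, …, κ*_{n−1}) started at x₀, constructed as the iterated product of the kernels. Then Q* = P.withDensity((x₁, …, x_n) ↦ h_n(x_n)/h_0(x₀)); in particular the Radon–Nikodym density of the controlled path measure with respect to the uncontrolled path measure is the telescoping product ∏_{t=0}^{n−1} h_{t+1}(x_{t+1})/h_t(x_t) = h_n(x_n)/h_0(x₀). -/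

import Mathlib

open MeasureTheory ProbabilityTheory

/-- The last state of a finite trajectory `(x₁, …, x_n)`, with the convention that the
empty trajectory has last state the initial point `x₀`. -/
def lastState {E : Type*} (x₀ : E) : ∀ {n : ℕ}, (Fin n → E) → E
  | 0, _ => x₀
  | (_ + 1), p => p (Fin.last _)

/-- The law on `E^n` of the full trajectory `(X₁, …, X_n)` of a (time-inhomogeneous)
Markov chain with transition (sub-)measures `K t`, started at `x₀`, constructed as the
iterated product of the transitions. -/
noncomputable def pathLaw {E : Type*} [MeasurableSpace E]
    (K : ℕ → E → Measure E) (x₀ : E) : (n : ℕ) → Measure (Fin n → E)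
  | 0 => Measure.dirac (fun i => i.elim0)
  | (n + 1) => (pathLaw K x₀ n).bind
      (fun p => (K n (lastState x₀ p)).map (Fin.snoc p))

/-!
Reweighting the step-`t` transition from `x` by `h (t + 1) y / h t x` multiplies the density of
the path law by that factor, and the product of these factors along a path telescopes. So by
induction on the number of steps, the transformed law of `(X₁, …, X_m)` has density
`h m (X_m) / h 0 x₀` with respect to the untransformed one.
-/

open scoped ENNReal NNReal

namespace MeasureTheory.Measure

variable {α β : Type*} [MeasurableSpace α] [MeasurableSpace β]

lemma _root_.Measurable.withDensity_measure {F : α → Measure β} (hF : Measurable F)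
    {w : β → ℝ≥0∞} (hw : Measurable w) : Measurable fun a => (F a).withDensity w := by
  refine measurable_of_measurable_coe _ fun s hs => ?_
  simp_rw [withDensity_apply _ hs, ← lintegral_indicator hs]
  exact (measurable_lintegral (hw.indicator hs)).comp hF

lemma bind_withDensity {μ : Measure α} {g : α → ℝ≥0∞} (hg : Measurable g) {F : α → Measure β}
    (hF : Measurable F) : (μ.withDensity g).bind F = μ.bind fun a => g a • F a := by
  have hgF : Measurable fun a => g a • F a := measurable_of_measurable_coe _ fun s hs => by
    simp only [smul_apply, smul_eq_mul]
    exact hg.mul ((measurable_coe hs).comp hF)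
  ext s hs
  rw [bind_apply hs hF.aemeasurable, bind_apply hs hgF.aemeasurable]
  exact lintegral_withDensity_eq_lintegral_mul _ hg ((measurable_coe hs).comp hF)

lemma withDensity_bind {μ : Measure α} {F : α → Measure β} (hF : Measurable F) {w : β → ℝ≥0∞}
    (hw : Measurable w) : (μ.bind F).withDensity w = μ.bind fun a => (F a).withDensity w := by
  ext s hs
  rw [withDensity_apply _ hs, bind_apply hs (hF.withDensity_measure hw).aemeasurable,
    ← lintegral_indicator hs, lintegral_bind hF.aemeasurable (hw.indicator hs).aemeasurable]
  simp_rw [lintegral_indicator hs, withDensity_apply _ hs]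

lemma withDensity_map {μ : Measure α} {f : α → β} (hf : Measurable f) {w : β → ℝ≥0∞}
    (hw : Measurable w) : (μ.map f).withDensity w = (μ.withDensity (w ∘ f)).map f := by
  ext s hs
  rw [withDensity_apply _ hs, map_apply hf hs, withDensity_apply _ (hf hs),
    setLIntegral_map hs hw hf, Function.comp_def]

lemma smul_map_withDensity {μ : Measure α} {d : α → ℝ≥0∞} (hd : Measurable d) {f : α → β}
    (hf : Measurable f) {w : β → ℝ≥0∞} (hw : Measurable w) {c : ℝ≥0∞}
    (hdw : ∀ a, c * d a = w (f a)) : c • (μ.withDensity d).map f = (μ.map f).withDensity w := by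
  rw [withDensity_map hf hw, ← Measure.map_smul, ← withDensity_smul _ hd]
  congr 2
  exact funext hdw

end MeasureTheory.Measure

@[simp]
lemma lastState_snoc {E : Type*} (x₀ : E) {m : ℕ} (p : Fin m → E) (y : E) :
    lastState x₀ (Fin.snoc p y : Fin (m + 1) → E) = y :=
  Fin.snoc_last (α := fun _ => E) y p

section PathLaw

variable {E : Type*} [MeasurableSpace E]

lemma measurable_lastState (x₀ : E) : ∀ {m : ℕ}, Measurable (lastState x₀ : (Fin m → E) → E)
  | 0 => measurable_const
  | _ + 1 => measurable_pi_apply _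

lemma measurable_snoc_uncurry {m : ℕ} :
    Measurable fun q : (Fin m → E) × E => (Fin.snoc q.1 q.2 : Fin (m + 1) → E) := by
  refine measurable_pi_lambda _ fun i => Fin.lastCases ?_ (fun j => ?_) i
  · simpa using measurable_snd
  · simpa using measurable_fst.eval

lemma measurable_snoc {m : ℕ} (p : Fin m → E) : Measurable (Fin.snoc (α := fun _ => E) p) :=
  measurable_snoc_uncurry.comp measurable_prodMk_left

lemma ProbabilityTheory.Kernel.measurable_map_snoc_lastState (η : Kernel E E) [IsSFiniteKernel η]
    (x₀ : E) (m : ℕ) :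
    Measurable fun p : Fin m → E => (η (lastState x₀ p)).map (Fin.snoc (α := fun _ => E) p) := by
  refine Measure.measurable_of_measurable_coe _ fun s hs => ?_
  simp_rw [Measure.map_apply (measurable_snoc _) hs]
  exact (η.comap _ (measurable_lastState x₀)).measurable_kernel_prodMk_left
    (measurable_snoc_uncurry hs)

theorem pathLaw_withDensity_eq_withDensity_pathLaw (κ : ℕ → Kernel E E)
    [∀ t, IsSFiniteKernel (κ t)] (D : ℕ → E → E → ℝ≥0) (W : ℕ → E → ℝ≥0∞) (x₀ : E) (n : ℕ)
    (hD : ∀ t < n, Measurable (Function.uncurry (D t))) (hW : ∀ t ≤ n, Measurable (W t))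
    (hW₀ : W 0 x₀ = 1) (hDW : ∀ t < n, ∀ x y, W t x * D t x y = W (t + 1) y) :
    pathLaw (fun t x => (κ t x).withDensity fun y => D t x y) x₀ n
      = (pathLaw (fun t x => κ t x) x₀ n).withDensity fun p => W n (lastState x₀ p) := by
  suffices ∀ m ≤ n, pathLaw (fun t x => (κ t x).withDensity fun y => D t x y) x₀ m
      = (pathLaw (fun t x => κ t x) x₀ m).withDensity fun p => W m (lastState x₀ p) from
    this n le_rfl
  intro m hm
  induction m with
  | zero =>
    simp only [lastState, hW₀]
    exact withDensity_one.symm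
  | succ m ih =>
    have hWm : Measurable fun p : Fin m → E => W m (lastState x₀ p) :=
      (hW m (by omega)).comp (measurable_lastState x₀)
    have hWm₁ : Measurable fun p : Fin (m + 1) → E => W (m + 1) (lastState x₀ p) :=
      (hW (m + 1) hm).comp (measurable_lastState x₀)
    have hDm : Measurable (Function.uncurry fun x y => (D m x y : ℝ≥0∞)) :=
      (hD m hm).coe_nnreal_ennreal
    have hκD : ∀ x, (κ m x).withDensity (fun y => D m x y)
        = Kernel.withDensity (κ m) (fun x y => D m x y) x :=
      fun x => (Kernel.withDensity_apply _ hDm x).symm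
    rw [pathLaw, pathLaw, ih (by omega)]
    simp_rw [hκD]
    rw [Measure.bind_withDensity hWm (Kernel.measurable_map_snoc_lastState _ x₀ m),
      Measure.withDensity_bind (Kernel.measurable_map_snoc_lastState _ x₀ m) hWm₁]
    congr 1
    funext p
    rw [← hκD]
    refine Measure.smul_map_withDensity (hDm.comp measurable_prodMk_left)
      (measurable_snoc p) hWm₁ fun y => ?_
    simp only [lastState_snoc]
    exact hDW m hm _ y

lemma measurable_of_eq_integral_succ (κ : ℕ → Kernel E E) (h : ℕ → E → ℝ) {n : ℕ}
    (hn : Measurable (h n)) (hrec : ∀ t < n, ∀ x, h t x = ∫ x', h (t + 1) x' ∂(κ t x)) :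
    ∀ t ≤ n, Measurable (h t) := by
  intro t ht
  induction ht using Nat.decreasingInduction with
  | self => exact hn
  | of_succ t ht ih =>
    rw [funext (hrec t ht)]
    exact (ih.stronglyMeasurable.integral_kernel (κ := κ t)).measurable

end PathLaw

theorem h_transform_path_law_general {E : Type*} [MeasurableSpace E]
    (n : ℕ) (κ : ℕ → Kernel E E) [∀ t, IsMarkovKernel (κ t)]
    (h : ℕ → E → ℝ)
    (hmeas : Measurable (h n))
    (hrec : ∀ t < n, ∀ x, h t x = ∫ x', h (t + 1) x' ∂(κ t x))
    (hpos : ∀ t ≤ n, ∀ x, 0 < h t x)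
    (x₀ : E) :
    pathLaw (fun t x => (κ t x).withDensity
        (fun x' => ENNReal.ofReal (h (t + 1) x' / h t x))) x₀ n
      = (pathLaw (fun t x => κ t x) x₀ n).withDensity
          (fun p => ENNReal.ofReal (h n (lastState x₀ p) / h 0 x₀)) := by
  have hh := measurable_of_eq_integral_succ κ h hmeas hrec
  have h₀ : 0 < h 0 x₀ := hpos 0 n.zero_le x₀
  refine pathLaw_withDensity_eq_withDensity_pathLaw κ (fun t x y => (h (t + 1) y / h t x).toNNReal)
    (fun t x => ENNReal.ofReal (h t x / h 0 x₀)) x₀ n (fun t ht => ?_) (fun t ht => ?_) ?_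
    (fun t ht x y => ?_)
  · exact ((hh (t + 1) ht).comp measurable_snd).div ((hh t ht.le).comp measurable_fst)
      |>.real_toNNReal
  · exact ((hh t ht).div_const _).ennreal_ofReal
  · simp [div_self h₀.ne']
  · change _ * ENNReal.ofReal _ = _
    rw [← ENNReal.ofReal_mul (div_nonneg (hpos t ht.le x).le h₀.le)]
    congr 1
    field_simp [(hpos t ht.le x).ne']

/-- Discrete-time path-measure form of the Doob h-transform: the h-transformed path
measure equals the original path measure reweighted by the telescoping density
`h n (x_n) / h 0 x₀`. -/
theorem h_transform_path_law {E : Type*} [MeasurableSpace E] [StandardBorelSpace E]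
    (n : ℕ) (κ : ℕ → Kernel E E) [∀ t, IsMarkovKernel (κ t)]
    (h : ℕ → E → ℝ)
    (hmeas : Measurable (h n)) (hbdd : ∃ C, ∀ x, |h n x| ≤ C)
    (hposn : ∀ x, 0 < h n x)
    (hrec : ∀ t < n, ∀ x, h t x = ∫ x', h (t + 1) x' ∂(κ t x))
    (hpos : ∀ t ≤ n, ∀ x, 0 < h t x)
    (x₀ : E) :
    pathLaw (fun t x => (κ t x).withDensity
        (fun x' => ENNReal.ofReal (h (t + 1) x' / h t x))) x₀ n
      = (pathLaw (fun t x => κ t x) x₀ n).withDensity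
          (fun p => ENNReal.ofReal (h n (lastState x₀ p) / h 0 x₀)) :=
  h_transform_path_law_general n κ h hmeas hrec hpos x₀
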